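/- Let D = {g_j} be a tight frame in C^N with frame bound A. Then for any nonzero f in C^N and any p ∈ [1, ∞], the sparsity of the analysis coefficients satisfies s_p(A_D f) ≤ A^{-|1/2 - 1/p|} · (max_j ‖g_j‖_2)^{|1 - 2/p|}, where s_p(v) = ‖v‖_2/‖v‖_p for p ≤ 2 and ‖v‖_p/‖v‖_2 for p > 2. -/

import Mathlib

open Finset ENNReal

noncomputable def lpnorm {ι : Type*} [Fintype ι] (p : ℝ) (f : ι → ℂ) : ℝ :=
  (∑ i, ‖f i‖ ^ p) ^ (1 / p)

noncomputable def lpnormE {ι : Type*} [Fintype ι] (p : ℝ≥0∞) (f : ι → ℂ) : ℝ :=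
  if p = ⊤ then ⨆ i, ‖f i‖
  else (∑ i, ‖f i‖ ^ p.toReal) ^ (1 / p.toReal)

noncomputable def spars {ι : Type*} [Fintype ι] (p : ℝ≥0∞) (f : ι → ℂ) : ℝ :=
  if p ≤ 2 then lpnormE 2 f / lpnormE p f else lpnormE p f / lpnormE 2 f

noncomputable def ip {ι : Type*} [Fintype ι] (x y : ι → ℂ) : ℂ :=
  ∑ i, x i * (starRingEnd ℂ) (y i)

lemma lpnorm_two_eq_sqrt {ι : Type*} [Fintype ι] (x : ι → ℂ) :
    lpnorm 2 x = Real.sqrt (∑ i, ‖x i‖ ^ 2) := by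
  rw [lpnorm, Real.sqrt_eq_rpow]
  simp_rw [Real.rpow_two]

lemma lpnormE_two_eq_sqrt {ι : Type*} [Fintype ι] (x : ι → ℂ) :
    lpnormE 2 x = Real.sqrt (∑ i, ‖x i‖ ^ 2) := by
  rw [lpnormE, if_neg (by norm_num)]
  norm_num [Real.sqrt_eq_rpow, Real.rpow_two]

lemma cs_ip {ι : Type*} [Fintype ι] (x y : ι → ℂ) :
    ‖ip x y‖ ≤ lpnorm 2 x * lpnorm 2 y := by
  calc ‖ip x y‖ ≤ ∑ i, ‖x i‖ * ‖y i‖ := by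
        refine (norm_sum_le _ _).trans_eq ?_
        exact Finset.sum_congr rfl fun i _ => by rw [norm_mul, Complex.norm_conj]
    _ ≤ Real.sqrt (∑ i, ‖x i‖ ^ 2) * Real.sqrt (∑ i, ‖y i‖ ^ 2) :=
        Real.sum_mul_le_sqrt_mul_sqrt _ _ _
    _ = lpnorm 2 x * lpnorm 2 y := by rw [lpnorm_two_eq_sqrt, lpnorm_two_eq_sqrt]

/-- Concentration bound for analysis coefficients under a tight frame. -/
theorem stmt10 {N : ℕ} {J : Type*} [Fintype J] [Nonempty J]
    (g : J → Fin N → ℂ) (A : ℝ) (hA : 0 < A)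
    (htight : ∀ f : Fin N → ℂ,
      ∑ j, ‖ip f (g j)‖ ^ 2 = A * (lpnorm 2 f) ^ 2)
    (f : Fin N → ℂ) (hf : f ≠ 0) (p : ℝ≥0∞) (hp : 1 ≤ p) :
    spars p (fun j => ip f (g j)) ≤
      A ^ (-|1 / 2 - 1 / p.toReal|) * (⨆ j, lpnorm 2 (g j)) ^ |1 - 2 / p.toReal| := by
  set G := ⨆ j, lpnorm 2 (g j) with hGdef
  set b := lpnorm 2 f with hbdef
  set a : J → ℝ := fun j => ‖ip f (g j)‖ with hadef
  have ha0 : ∀ j, 0 ≤ a j := fun j => norm_nonneg _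
  have hb0 : 0 < b := by
    rw [hbdef, lpnorm_two_eq_sqrt]
    apply Real.sqrt_pos.mpr
    obtain ⟨i, hi⟩ := Function.ne_iff.mp hf
    apply Finset.sum_pos' (fun i _ => by positivity)
    exact ⟨i, Finset.mem_univ i, pow_pos (norm_pos_iff.mpr hi) 2⟩
  have hsum : ∑ j, a j ^ 2 = A * b ^ 2 := htight f
  have hgG : ∀ j, lpnorm 2 (g j) ≤ G :=
    fun j => le_ciSup (f := fun j => lpnorm 2 (g j)) (Set.Finite.bddAbove (Set.finite_range _)) j
  have haG : ∀ j, a j ≤ b * G := fun j =>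
    (cs_ip f (g j)).trans (mul_le_mul_of_nonneg_left (hgG j) hb0.le)
  have hG0 : 0 < G := by
    by_contra h
    push_neg at h
    have hz : ∀ j, a j = 0 := fun j =>
      le_antisymm ((haG j).trans (by nlinarith)) (ha0 j)
    have : (0:ℝ) = A * b ^ 2 := by rw [← hsum]; simp [hz]
    nlinarith [mul_pos hA (pow_pos hb0 2)]
  have hbG : 0 < b * G := mul_pos hb0 hG0
  have h2 : lpnormE 2 (fun j => ip f (g j)) = A ^ ((1:ℝ)/2) * b := by
    rw [lpnormE_two_eq_sqrt]
    have : ∑ j, ‖ip f (g j)‖ ^ 2 = A * b ^ 2 := hsum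
    rw [this, Real.sqrt_mul hA.le, Real.sqrt_sq hb0.le, Real.sqrt_eq_rpow]
  have h20 : 0 < lpnormE 2 (fun j => ip f (g j)) := by
    rw [h2]; positivity
  by_cases hptop : p = ⊤
  · subst hptop
    rw [spars, if_neg (by simp)]
    have hsup : lpnormE ⊤ (fun j => ip f (g j)) ≤ b * G := by
      rw [lpnormE, if_pos rfl]
      exact ciSup_le haG
    simp only [ENNReal.toReal_top]
    rw [show |1/2 - 1/(0:ℝ)| = 1/2 by norm_num [abs_div],
      show |1 - 2/(0:ℝ)| = 1 by norm_num, Real.rpow_one,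
      h2, div_le_iff₀ (by positivity)]
    calc lpnormE ⊤ (fun j => ip f (g j)) ≤ b * G := hsup
      _ = A ^ (-(1/2:ℝ)) * A ^ ((1:ℝ)/2) * (G * b) := by
          rw [← Real.rpow_add hA]
          norm_num [mul_comm]
      _ = A ^ (-(1/2:ℝ)) * G * (A ^ ((1:ℝ)/2) * b) := by ring
  · set q := p.toReal with hqdef
    have hq1 : 1 ≤ q := by
      have := ENNReal.toReal_mono hptop hp
      simpa using this
    have hq0 : 0 < q := by linarith
    have hq0' : q ≠ 0 := ne_of_gt hq0
    have hpE : lpnormE p (fun j => ip f (g j)) = (∑ j, a j ^ q) ^ ((1:ℝ)/q) := by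
      rw [lpnormE, if_neg hptop]
    have heq : (A * b ^ 2 * (b * G) ^ (q - 2)) ^ ((1:ℝ)/q)
        = A ^ ((1:ℝ)/q) * G ^ (1 - 2/q) * b := by
      have e1 : A * b ^ 2 * (b * G) ^ (q - 2) = A * G ^ (q-2) * b ^ q := by
        rw [Real.mul_rpow hb0.le hG0.le,
          show A * b^2 * (b^(q-2) * G^(q-2)) = A * G^(q-2) * (b^(2:ℝ) * b^(q-2)) by
            rw [Real.rpow_two]; ring,
          ← Real.rpow_add hb0, show (2:ℝ)+(q-2) = q by ring]
      rw [e1, Real.mul_rpow (by positivity) (by positivity),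
        Real.mul_rpow hA.le (by positivity),
        ← Real.rpow_mul hG0.le, ← Real.rpow_mul hb0.le,
        show q * ((1:ℝ)/q) = 1 by field_simp,
        show (q-2) * ((1:ℝ)/q) = 1 - 2/q by field_simp,
        Real.rpow_one]
    by_cases hp2 : p ≤ 2
    · -- 1 ≤ q ≤ 2
      have hq2 : q ≤ 2 := by
        have := ENNReal.toReal_mono (by norm_num) hp2
        simpa using this
      have key : ∀ j, a j ^ 2 * (b * G) ^ (q - 2) ≤ a j ^ q := by
        intro j
        rcases eq_or_lt_of_le (ha0 j) with h | h
        · rw [← h, Real.zero_rpow hq0']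
          norm_num
        · have h1 : (b * G) ^ (q-2) ≤ a j ^ (q-2) :=
            Real.rpow_le_rpow_of_nonpos h (haG j) (by linarith)
          calc a j ^ 2 * (b*G)^(q-2) ≤ a j ^ 2 * a j ^ (q-2) :=
                mul_le_mul_of_nonneg_left h1 (sq_nonneg _)
            _ = a j ^ q := by
                rw [← Real.rpow_two, ← Real.rpow_add h]; ring_nf
      have hlow : A * b ^ 2 * (b*G)^(q-2) ≤ ∑ j, a j ^ q := by
        calc A * b^2 * (b*G)^(q-2) = ∑ j, a j ^ 2 * (b*G)^(q-2) := by
              rw [← Finset.sum_mul, hsum]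
          _ ≤ ∑ j, a j ^ q := Finset.sum_le_sum fun j _ => key j
      have hlow2 : A ^ ((1:ℝ)/q) * G ^ (1 - 2/q) * b ≤ (∑ j, a j ^ q) ^ ((1:ℝ)/q) := by
        rw [← heq]
        exact Real.rpow_le_rpow (by positivity) hlow (by positivity)
      have hT0 : 0 < (∑ j, a j ^ q) ^ ((1:ℝ)/q) :=
        lt_of_lt_of_le (by positivity) hlow2
      rw [spars, if_pos hp2, h2, hpE, div_le_iff₀ hT0]
      have habs1 : |1/2 - 1/q| = 1/q - 1/2 := by
        rw [abs_of_nonpos (by rw [sub_nonpos, div_le_div_iff₀ (by norm_num : (0:ℝ) < 2) hq0]; linarith)]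
        ring
      have habs2 : |1 - 2/q| = 2/q - 1 := by
        rw [abs_of_nonpos (by rw [sub_nonpos, le_div_iff₀ hq0]; linarith)]
        ring
      rw [habs1, habs2]
      calc A ^ ((1:ℝ)/2) * b
          = A ^ (-(1/q - 1/2)) * G ^ (2/q - 1) * (A ^ ((1:ℝ)/q) * G ^ (1 - 2/q) * b) := by
            rw [show A ^ (-(1/q - 1/2)) * G ^ (2/q - 1) * (A ^ ((1:ℝ)/q) * G ^ (1 - 2/q) * b)
                = (A ^ (-(1/q - 1/2)) * A ^ ((1:ℝ)/q)) * (G ^ (2/q - 1) * G ^ (1 - 2/q)) * b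
                by ring, ← Real.rpow_add hA, ← Real.rpow_add hG0]
            norm_num
        _ ≤ A ^ (-(1/q - 1/2)) * G ^ (2/q - 1) * (∑ j, a j ^ q) ^ ((1:ℝ)/q) :=
            mul_le_mul_of_nonneg_left hlow2 (by positivity)
    · -- q > 2
      have hq2 : 2 < q := by
        rw [hqdef]
        have h2q : (2:ℝ≥0∞) < p := lt_of_not_ge hp2
        have : ((2:ℝ≥0∞)).toReal < p.toReal :=
          (ENNReal.toReal_lt_toReal (by norm_num) hptop).mpr h2q
        simpa using this
      have key : ∀ j, a j ^ q ≤ a j ^ 2 * (b * G) ^ (q - 2) := by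
        intro j
        rcases eq_or_lt_of_le (ha0 j) with h | h
        · rw [← h, Real.zero_rpow hq0']
          positivity
        · have h1 : a j ^ (q-2) ≤ (b * G) ^ (q-2) :=
            Real.rpow_le_rpow (ha0 j) (haG j) (by linarith)
          calc a j ^ q = a j ^ 2 * a j ^ (q-2) := by
                rw [← Real.rpow_two, ← Real.rpow_add h]; ring_nf
            _ ≤ a j ^ 2 * (b*G)^(q-2) := mul_le_mul_of_nonneg_left h1 (sq_nonneg _)
      have hupp : ∑ j, a j ^ q ≤ A * b ^ 2 * (b*G)^(q-2) := by
        calc ∑ j, a j ^ q ≤ ∑ j, a j ^ 2 * (b*G)^(q-2) := Finset.sum_le_sum fun j _ => key j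
          _ = A * b^2 * (b*G)^(q-2) := by rw [← Finset.sum_mul, hsum]
      have hupp2 : (∑ j, a j ^ q) ^ ((1:ℝ)/q) ≤ A ^ ((1:ℝ)/q) * G ^ (1 - 2/q) * b := by
        rw [← heq]
        exact Real.rpow_le_rpow (by positivity) hupp (by positivity)
      rw [spars, if_neg hp2, h2, hpE, div_le_iff₀ (by positivity)]
      have habs1 : |1/2 - 1/q| = 1/2 - 1/q := by
        rw [abs_of_nonneg (by rw [sub_nonneg, div_le_div_iff₀ hq0 (by norm_num : (0:ℝ) < 2)]; linarith)]
      have habs2 : |1 - 2/q| = 1 - 2/q := by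
        rw [abs_of_nonneg (by rw [sub_nonneg, div_le_iff₀ hq0]; linarith)]
      rw [habs1, habs2]
      calc (∑ j, a j ^ q) ^ ((1:ℝ)/q) ≤ A ^ ((1:ℝ)/q) * G ^ (1 - 2/q) * b := hupp2
        _ = A ^ (-(1/2 - 1/q)) * G ^ (1 - 2/q) * (A ^ ((1:ℝ)/2) * b) := by
            rw [show A ^ (-(1/2 - 1/q)) * G ^ (1 - 2/q) * (A ^ ((1:ℝ)/2) * b)
                = (A ^ (-(1/2 - 1/q)) * A ^ ((1:ℝ)/2)) * G ^ (1 - 2/q) * b by ring,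
              ← Real.rpow_add hA]
            norm_num
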